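/- Let H be a Hilbert space, let T : H → H be a unitary operator, let F ⊆ H be a finite-dimensional linear subspace and let ε > 0. Then there exist K₀ ∈ ℕ and δ > 0 such that: whenever n ∈ ℕ, T̂ₙ : Fₙ → Fₙ is a linear operator on the n-th delay subspace Fₙ, and K ≥ K₀ is such that ‖T̂ₙ^k x − T^k x‖ ≤ δ‖x‖ holds for all x ∈ Fₙ and all k ∈ {0, …, K−1}, then dim(Fₙ) ≥ K (h_apr(T, F) − ε). -/

import Mathlib

/-!
Suppose `T̂ₙ` follows `T` on `Fₙ` up to relative error `δ` for `K` steps. Writing `k = Kq + r`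
with `r < K`, the point `T^k x` of the orbit of `x ∈ F ⊆ Fₙ` lies within `δ‖x‖` of
`T^{Kq} T̂ₙ^r x ∈ T^{Kq} Fₙ`, because `T^{Kq}` is an isometry. So the first `m` points of the
orbit of a finite `ω ⊆ F` are `δ'`-approximated by the sum of the `⌊m/K⌋ + 1` spaces
`T^{Kq} Fₙ` as soon as `δ · max_{x ∈ ω} ‖x‖ < δ'`, whence `h_apr(T, ω, δ') ≤ dim Fₙ / K`.
Choosing `ω` and `δ'` with `h_apr(T, ω, δ') > h_apr(T, F) - ε` gives the theorem with `K₀ = 1`.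
-/

open MeasureTheory

/-- `H_apr(ω, δ)`: the minimal dimension of a finite-dimensional subspace `F ⊆ H` such that
every `x ∈ ω` is within distance `< δ` of some `y ∈ F`. -/
noncomputable def Hapr {H : Type*} [NormedAddCommGroup H] [InnerProductSpace ℂ H]
    (ω : Set H) (δ : ℝ) : ℕ :=
  sInf {d : ℕ | ∃ F : Submodule ℂ H, FiniteDimensional ℂ ↥F ∧ Module.finrank ℂ ↥F = d ∧
    ∀ x ∈ ω, ∃ y ∈ F, ‖x - y‖ < δ}

/-- `h_apr(T, ω, δ) = lim_{n → ∞} (1/n) H_apr(⋃_{k=0}^{n-1} T^k ω, δ)` (the limit exists by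
subadditivity, hence coincides with the limit superior used here). -/
noncomputable def haprδ {H : Type*} [NormedAddCommGroup H] [InnerProductSpace ℂ H]
    (T : H → H) (ω : Set H) (δ : ℝ) : ℝ :=
  Filter.limsup (fun n : ℕ => (Hapr (⋃ k < n, T^[k] '' ω) δ : ℝ) / n) Filter.atTop

/-- `h_apr(T, ω) = sup_{δ > 0} h_apr(T, ω, δ)`, the approximation entropy of `ω` with
respect to `T`. -/
noncomputable def haprω {H : Type*} [NormedAddCommGroup H] [InnerProductSpace ℂ H]
    (T : H → H) (ω : Set H) : ℝ :=
  ⨆ (δ : ℝ) (_ : 0 < δ), haprδ T ω δ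

/-- `h_apr(T, F)`: the approximation entropy of a subspace `F`, the supremum of `h_apr(T, ω)`
over all finite subsets `ω ⊆ F`. -/
noncomputable def haprSub {H : Type*} [NormedAddCommGroup H] [InnerProductSpace ℂ H]
    (T : H → H) (F : Submodule ℂ H) : ℝ :=
  ⨆ (ω : Finset H) (_ : (ω : Set H) ⊆ (F : Set H)), haprω T (ω : Set H)

/-- The `n`-th delay subspace `Fₙ = span ⋃_{k=0}^{n} T^k F`. -/
noncomputable def delaySub {H : Type*} [NormedAddCommGroup H] [InnerProductSpace ℂ H]
    (T : H → H) (F : Submodule ℂ H) (n : ℕ) : Submodule ℂ H :=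
  Submodule.span ℂ (⋃ k ≤ n, T^[k] '' (F : Set H))

open Module Filter Finset

theorem Submodule.finrank_finset_sup_le {K V ι : Type*} [DivisionRing K] [AddCommGroup V]
    [Module K V] (s : Finset ι) (f : ι → Submodule K V) [∀ i, FiniteDimensional K (f i)]
    {d : ℕ} (h : ∀ i ∈ s, finrank K (f i) ≤ d) : finrank K ↥(s.sup f) ≤ #s * d := by
  classical
  induction s using Finset.cons_induction with
  | empty => simp
  | cons a s ha ih =>
    have := Submodule.finiteDimensional_finset_sup s f
    rw [Finset.sup_cons, Finset.card_cons, add_one_mul, add_comm]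
    exact (Submodule.finrank_add_le_finrank_add_finrank _ _).trans <|
      add_le_add (h a (s.mem_cons_self a)) (ih fun i hi ↦ h i (Finset.mem_cons_of_mem hi))

theorem limsup_div_le_of_le_div_add_one_mul {a : ℕ → ℕ} {K d : ℕ}
    (h : ∀ m, a m ≤ (m / K + 1) * d) :
    limsup (fun m : ℕ ↦ (a m : ℝ) / m) atTop ≤ d / K := by
  have hlim : Tendsto (fun m : ℕ ↦ (d : ℝ) / K + d / m) atTop (nhds (d / K)) := by
    simpa using tendsto_const_nhds.add (tendsto_const_div_atTop_nhds_zero_nat (d : ℝ))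
  refine (limsup_le_limsup ?_ ?_ hlim.isBoundedUnder_le).trans hlim.limsup_eq.le
  · filter_upwards [eventually_gt_atTop 0] with m hm
    have hm : (0 : ℝ) < m := by exact_mod_cast hm
    have hdiv : ((m / K : ℕ) : ℝ) ≤ m / K := Nat.cast_div_le
    rw [div_le_iff₀ hm, add_mul, div_mul_cancel₀ _ hm.ne']
    calc (a m : ℝ) ≤ ((m / K : ℕ) + 1) * d := by exact_mod_cast h m
      _ ≤ (m / K + 1) * d := by gcongr
      _ = d / K * m + d := by ring
  · exact isBoundedUnder_of ⟨0, fun m ↦ by positivity⟩ |>.isCoboundedUnder_le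

section

variable {H : Type*} [NormedAddCommGroup H] [InnerProductSpace ℂ H]

theorem Hapr_le_finrank {ω : Set H} {δ : ℝ} (G : Submodule ℂ H) [FiniteDimensional ℂ G]
    (hG : ∀ x ∈ ω, ∃ y ∈ G, ‖x - y‖ < δ) : Hapr ω δ ≤ finrank ℂ G :=
  Nat.sInf_le ⟨G, inferInstance, rfl, hG⟩

theorem le_delaySub (T : H → H) (F : Submodule ℂ H) (n : ℕ) : F ≤ delaySub T F n :=
  fun x hx ↦ Submodule.subset_span <| Set.mem_biUnion (Nat.zero_le n) ⟨x, hx, rfl⟩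

theorem finiteDimensional_delaySub (T : H →ₗ[ℂ] H) (F : Submodule ℂ H)
    [FiniteDimensional ℂ F] (n : ℕ) : FiniteDimensional ℂ (delaySub T F n) := by
  refine Submodule.finiteDimensional_of_le (S₂ := ⨆ k : Fin (n + 1), F.map (T ^ (k : ℕ))) ?_
  rw [delaySub, Submodule.span_le]
  rintro _ ⟨_, ⟨k, rfl⟩, _, ⟨hk, rfl⟩, y, hy, rfl⟩
  exact Submodule.mem_iSup_of_mem (⟨k, Nat.lt_succ_of_le hk⟩ : Fin (n + 1))
    ⟨y, hy, Module.End.pow_apply T k y⟩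

theorem exists_near_map_pow_of_approx (T : H →ₗᵢ[ℂ] H) {G : Submodule ℂ H} (S : G →ₗ[ℂ] G)
    {K : ℕ} (hK : 0 < K) {δ : ℝ}
    (hS : ∀ (x : G) (k : ℕ), k < K → ‖((S ^ k) x : H) - T^[k] x‖ ≤ δ * ‖(x : H)‖)
    (x : G) (k : ℕ) :
    ∃ y ∈ G.map (T ^ (K * (k / K))).toLinearMap, ‖T^[k] x - y‖ ≤ δ * ‖(x : H)‖ := by
  refine ⟨(T ^ (K * (k / K))) ((S ^ (k % K)) x), ⟨_, ((S ^ (k % K)) x).2, rfl⟩, ?_⟩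
  have hsplit : T^[k] x = (T ^ (K * (k / K))) (T^[k % K] x) := by
    rw [LinearIsometry.coe_pow, ← Function.iterate_add_apply, Nat.div_add_mod]
  rw [hsplit, ← map_sub, LinearIsometry.norm_map, norm_sub_rev]
  exact hS x _ (Nat.mod_lt k hK)

theorem Hapr_orbit_le (T : H →ₗᵢ[ℂ] H) {G : Submodule ℂ H} [FiniteDimensional ℂ G]
    (S : G →ₗ[ℂ] G) {K : ℕ} (hK : 0 < K) {δ δ' : ℝ}
    (hS : ∀ (x : G) (k : ℕ), k < K → ‖((S ^ k) x : H) - T^[k] x‖ ≤ δ * ‖(x : H)‖)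
    {ω : Set H} (hωG : ω ⊆ G) (hω : ∀ x ∈ ω, δ * ‖x‖ < δ') (m : ℕ) :
    Hapr (⋃ k < m, T^[k] '' ω) δ' ≤ (m / K + 1) * finrank ℂ G := by
  let cover := (range (m / K + 1)).sup fun j ↦ G.map (T ^ (K * j)).toLinearMap
  have hcover : finrank ℂ cover ≤ (m / K + 1) * finrank ℂ G := by
    simpa using Submodule.finrank_finset_sup_le (range (m / K + 1))
      (fun j ↦ G.map (T ^ (K * j)).toLinearMap) fun j _ ↦ Submodule.finrank_map_le _ G
  refine (Hapr_le_finrank cover ?_).trans hcover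
  simp only [Set.mem_iUnion, Set.mem_image]
  rintro _ ⟨k, hk, x, hx, rfl⟩
  obtain ⟨y, hy, hxy⟩ := exists_near_map_pow_of_approx T S hK hS ⟨x, hωG hx⟩ k
  have hj : k / K ∈ range (m / K + 1) :=
    mem_range.2 (Nat.lt_succ_of_le (Nat.div_le_div_right hk.le))
  exact ⟨y, le_sup (f := fun j ↦ G.map (T ^ (K * j)).toLinearMap) hj hy,
    hxy.trans_lt (hω x hx)⟩

theorem haprδ_le_finrank_div (T : H →ₗᵢ[ℂ] H) {G : Submodule ℂ H} [FiniteDimensional ℂ G]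
    (S : G →ₗ[ℂ] G) {K : ℕ} (hK : 0 < K) {δ δ' : ℝ}
    (hS : ∀ (x : G) (k : ℕ), k < K → ‖((S ^ k) x : H) - T^[k] x‖ ≤ δ * ‖(x : H)‖)
    {ω : Set H} (hωG : ω ⊆ G) (hω : ∀ x ∈ ω, δ * ‖x‖ < δ') :
    haprδ T ω δ' ≤ finrank ℂ G / K :=
  limsup_div_le_of_le_div_add_one_mul (Hapr_orbit_le T S hK hS hωG hω)

-- `0 ≤ c` rules out the empty suprema `⨆ _ : False, _ = 0` of the bounded-quantifier `⨆`s.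
theorem exists_lt_haprδ_of_lt_haprSub {T : H → H} {F : Submodule ℂ H} {c : ℝ} (hc : 0 ≤ c)
    (h : c < haprSub T F) :
    ∃ ω : Finset H, (ω : Set H) ⊆ F ∧ ∃ δ > 0, c < haprδ T ω δ := by
  obtain ⟨ω, hω⟩ := exists_lt_of_lt_ciSup h
  have hωF : (ω : Set H) ⊆ F := by
    by_contra hωF
    rw [ciSup_neg hωF, Real.sSup_empty] at hω
    linarith
  rw [ciSup_pos hωF, haprω] at hω
  obtain ⟨δ, hδ⟩ := exists_lt_of_lt_ciSup hω
  have hδ0 : 0 < δ := by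
    by_contra hδ0
    rw [ciSup_neg hδ0, Real.sSup_empty] at hδ
    linarith
  exact ⟨ω, hωF, δ, hδ0, by rwa [ciSup_pos hδ0] at hδ⟩

end

theorem stmt3_general {H : Type*} [NormedAddCommGroup H] [InnerProductSpace ℂ H]
    (T : H ≃ₗᵢ[ℂ] H) (F : Submodule ℂ H) [FiniteDimensional ℂ ↥F] (ε : ℝ) (hε : 0 < ε) :
    ∃ (K₀ : ℕ) (δ : ℝ), 0 < δ ∧
      ∀ (n : ℕ) (Tn : ↥(delaySub (⇑T) F n) →ₗ[ℂ] ↥(delaySub (⇑T) F n)) (K : ℕ), K₀ ≤ K →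
        (∀ (x : ↥(delaySub (⇑T) F n)) (k : ℕ), k < K →
          ‖(((Tn ^ k) x : ↥(delaySub (⇑T) F n)) : H) - (⇑T)^[k] (x : H)‖ ≤ δ * ‖(x : H)‖) →
        (K : ℝ) * (haprSub (⇑T) F - ε) ≤ (Module.finrank ℂ ↥(delaySub (⇑T) F n) : ℝ) := by
  by_cases hnonpos : haprSub T F - ε ≤ 0
  · exact ⟨0, 1, one_pos, fun n _ K _ _ ↦
      (mul_nonpos_of_nonneg_of_nonpos K.cast_nonneg hnonpos).trans (Nat.cast_nonneg _)⟩
  obtain ⟨ω, hωF, δ', hδ', hω⟩ :=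
    exists_lt_haprδ_of_lt_haprSub (not_le.1 hnonpos).le (sub_lt_self _ hε)
  set M := ω.sup (‖·‖₊)
  have hMω : ∀ x ∈ (ω : Set H), δ' / (M + 1) * ‖x‖ < δ' := fun x hx ↦ by
    have hxM : ‖x‖ ≤ M := le_sup (f := (‖·‖₊)) hx
    rw [div_mul_eq_mul_div, div_lt_iff₀ (by positivity)]
    nlinarith
  refine ⟨1, δ' / (M + 1), by positivity, fun n Tn K hK hTn ↦ ?_⟩
  have := finiteDimensional_delaySub T.toLinearEquiv.toLinearMap F n
  have hdim := haprδ_le_finrank_div T.toLinearIsometry Tn hK hTn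
    (hωF.trans (le_delaySub _ F n)) hMω
  rw [← le_div_iff₀' (by exact_mod_cast hK)]
  exact hω.le.trans hdim

/-- Let `T` be a unitary operator on a Hilbert space `H`, `F ⊆ H` a
finite-dimensional subspace and `ε > 0`. Then there exist `K₀ ∈ ℕ` and `δ > 0` such that:
whenever `n ∈ ℕ`, `T̂ₙ : Fₙ → Fₙ` is a linear operator on the `n`-th delay subspace `Fₙ` and
`K ≥ K₀` satisfies `‖T̂ₙ^k x - T^k x‖ ≤ δ ‖x‖` for all `x ∈ Fₙ` and `k ∈ {0, …, K-1}`, then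
`dim Fₙ ≥ K (h_apr(T, F) - ε)`. -/
theorem stmt3 {H : Type*} [NormedAddCommGroup H] [InnerProductSpace ℂ H] [CompleteSpace H]
    (T : H ≃ₗᵢ[ℂ] H) (F : Submodule ℂ H) [FiniteDimensional ℂ ↥F] (ε : ℝ) (hε : 0 < ε) :
    ∃ (K₀ : ℕ) (δ : ℝ), 0 < δ ∧
      ∀ (n : ℕ) (Tn : ↥(delaySub (⇑T) F n) →ₗ[ℂ] ↥(delaySub (⇑T) F n)) (K : ℕ), K₀ ≤ K →
        (∀ (x : ↥(delaySub (⇑T) F n)) (k : ℕ), k < K →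
          ‖(((Tn ^ k) x : ↥(delaySub (⇑T) F n)) : H) - (⇑T)^[k] (x : H)‖ ≤ δ * ‖(x : H)‖) →
        (K : ℝ) * (haprSub (⇑T) F - ε) ≤ (Module.finrank ℂ ↥(delaySub (⇑T) F n) : ℝ) :=
  stmt3_general T F ε hε
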